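/- For every integer d ≥ 1, there exists a polynomial q with integer coefficients such that for every integer n ≥ 0, ∑_{k=0}^{n−1} (k^d − b(d))/k! = −q(n)/n!. -/

import Mathlib

/-- The Bell numbers: `bell 0 = 1` and `bell (d+1) = ∑_{j=0}^{d} C(d,j) * bell j`. -/
def bell : ℕ → ℕ
  | 0 => 1
  | d + 1 => ∑ j ∈ (Finset.range (d + 1)).attach, Nat.choose d j.1 * bell j.1
  decreasing_by exact Finset.mem_range.mp j.2

open Finset Polynomial

lemma bell_succ (d : ℕ) : bell (d + 1) = ∑ j ∈ Finset.range (d + 1), Nat.choose d j * bell j := by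
  rw [bell]
  exact Finset.sum_attach (Finset.range (d + 1)) (fun j => Nat.choose d j * bell j)

lemma key : ∀ d : ℕ, ∃ q : Polynomial ℤ, ∀ n : ℕ,
    ∑ k ∈ Finset.range n, (((k : ℚ) ^ d - (bell d : ℚ)) / (Nat.factorial k : ℚ)) =
      -(((q.eval (n : ℤ) : ℤ) : ℚ) / (Nat.factorial n : ℚ)) := by
  intro d
  induction d using Nat.strong_induction_on with
  | _ d ih =>
  match d, ih with
  | 0, _ => exact ⟨0, fun n => by simp [bell]⟩
  | d + 1, ih =>
    set qf : ℕ → Polynomial ℤ := fun i => if h : i < d + 1 then (ih i h).choose else 0 with hqfdef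
    have hqf : ∀ i, i < d + 1 → ∀ n : ℕ,
        ∑ k ∈ Finset.range n, (((k : ℚ) ^ i - (bell i : ℚ)) / (Nat.factorial k : ℚ)) =
          -((((qf i).eval (n : ℤ) : ℤ) : ℚ) / (Nat.factorial n : ℚ)) := by
      intro i h
      simp only [hqfdef, dif_pos h]
      exact (ih i h).choose_spec
    set Q : Polynomial ℤ := Polynomial.X * ((∑ i ∈ Finset.range (d + 1),
        Polynomial.C ((Nat.choose d i : ℤ)) * ((qf i).comp (Polynomial.X - 1)))
        + Polynomial.C ((bell (d + 1) : ℤ))) with hQdef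
    refine ⟨Q, fun n => ?_⟩
    cases n with
    | zero => simp [hQdef]
    | succ m =>
      have hm : (Nat.factorial m : ℚ) ≠ 0 := by positivity
      -- evaluate the polynomial
      have heval : ((Q.eval ((m + 1 : ℕ) : ℤ) : ℤ) : ℚ)
          = ((m : ℚ) + 1) * ((∑ i ∈ Finset.range (d + 1),
              (Nat.choose d i : ℚ) * (((qf i).eval (m : ℤ) : ℤ) : ℚ)) + (bell (d + 1) : ℚ)) := by
        rw [hQdef]
        push_cast
        simp [Polynomial.eval_finset_sum, Polynomial.eval_comp]
      rw [heval]
      -- factorial of m+1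
      have hfact : ((m + 1 : ℕ).factorial : ℚ) = ((m : ℚ) + 1) * (Nat.factorial m : ℚ) := by
        rw [Nat.factorial_succ]; push_cast; ring
      rw [hfact]
      have hm1 : ((m : ℚ) + 1) ≠ 0 := by positivity
      rw [mul_div_mul_left _ _ hm1]
      -- now compute LHS
      have hsplit : ∑ k ∈ Finset.range (m + 1),
          (((k : ℚ) ^ (d + 1) - (bell (d + 1) : ℚ)) / (Nat.factorial k : ℚ))
          = (∑ k ∈ Finset.range (m + 1), ((k : ℚ) ^ (d + 1) / (Nat.factorial k : ℚ)))
            - (∑ k ∈ Finset.range (m + 1), ((bell (d + 1) : ℚ) / (Nat.factorial k : ℚ))) := by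
        rw [← Finset.sum_sub_distrib]
        exact Finset.sum_congr rfl fun k _ => by rw [sub_div]
      rw [hsplit]
      -- shift the first sum
      have hshift : (∑ k ∈ Finset.range (m + 1), ((k : ℚ) ^ (d + 1) / (Nat.factorial k : ℚ)))
          = ∑ j ∈ Finset.range m, (((j : ℚ) + 1) ^ d / (Nat.factorial j : ℚ)) := by
        rw [Finset.sum_range_succ' (fun k => ((k : ℚ) ^ (d + 1) / (Nat.factorial k : ℚ))) m]
        simp only [Nat.cast_zero, Nat.factorial_zero]
        rw [zero_pow (Nat.succ_ne_zero d)]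
        rw [zero_div, add_zero]
        refine Finset.sum_congr rfl fun j _ => ?_
        rw [Nat.factorial_succ, pow_succ]
        push_cast
        have hj : ((j : ℚ) + 1) ≠ 0 := by positivity
        have hjf : (Nat.factorial j : ℚ) ≠ 0 := by positivity
        field_simp
      rw [hshift]
      -- binomial expansion
      have hbin : ∀ j : ℕ, ((j : ℚ) + 1) ^ d = ∑ i ∈ Finset.range (d + 1),
          (j : ℚ) ^ i * (Nat.choose d i : ℚ) := by
        intro j
        rw [add_pow]
        refine Finset.sum_congr rfl fun i _ => by rw [one_pow, mul_one]
      have hexp : (∑ j ∈ Finset.range m, (((j : ℚ) + 1) ^ d / (Nat.factorial j : ℚ)))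
          = ∑ i ∈ Finset.range (d + 1), (Nat.choose d i : ℚ) *
              (∑ j ∈ Finset.range m, ((j : ℚ) ^ i / (Nat.factorial j : ℚ))) := by
        simp_rw [hbin, Finset.sum_div]
        rw [Finset.sum_comm]
        refine Finset.sum_congr rfl fun i _ => ?_
        rw [Finset.mul_sum]
        refine Finset.sum_congr rfl fun j _ => ?_
        ring
      rw [hexp]
      have hinner : ∀ i, i < d + 1 →
          (∑ j ∈ Finset.range m, ((j : ℚ) ^ i / (Nat.factorial j : ℚ)))
          = -((((qf i).eval (m : ℤ) : ℤ) : ℚ) / (Nat.factorial m : ℚ))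
            + (bell i : ℚ) * ∑ j ∈ Finset.range m, (1 / (Nat.factorial j : ℚ)) := by
        intro i hi
        rw [← hqf i hi m, Finset.mul_sum, ← Finset.sum_add_distrib]
        refine Finset.sum_congr rfl fun j _ => ?_
        rw [sub_div]
        ring
      rw [Finset.sum_congr rfl fun i hi => by rw [hinner i (Finset.mem_range.mp hi)]]
      have hB2 : (∑ k ∈ Finset.range (m + 1), ((bell (d + 1) : ℚ) / (Nat.factorial k : ℚ)))
          = (bell (d + 1) : ℚ) * (∑ j ∈ Finset.range m, (1 / (Nat.factorial j : ℚ)))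
            + (bell (d + 1) : ℚ) / (Nat.factorial m : ℚ) := by
        rw [Finset.sum_range_succ, Finset.mul_sum]
        congr 1
        refine Finset.sum_congr rfl fun j _ => ?_
        rw [mul_one_div]
      rw [hB2]
      have hB : ((bell (d + 1) : ℚ)) = ∑ i ∈ Finset.range (d + 1),
          (Nat.choose d i : ℚ) * (bell i : ℚ) := by
        rw [bell_succ]
        push_cast
        rfl
      simp_rw [mul_add, Finset.sum_add_distrib]
      rw [hB, Finset.sum_mul]
      have hcancel : ∀ i ∈ Finset.range (d + 1),
          (Nat.choose d i : ℚ) * ((bell i : ℚ) * ∑ j ∈ Finset.range m, (1 / (Nat.factorial j : ℚ)))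
          = ((Nat.choose d i : ℚ) * (bell i : ℚ)) * ∑ j ∈ Finset.range m, (1 / (Nat.factorial j : ℚ)) := by
        intro i _
        ring
      rw [Finset.sum_congr rfl hcancel]
      have hfin : ∀ i ∈ Finset.range (d + 1),
          (Nat.choose d i : ℚ) * (-((((qf i).eval (m : ℤ) : ℤ) : ℚ) / (Nat.factorial m : ℚ)))
          = -(((Nat.choose d i : ℚ) * (((qf i).eval (m : ℤ) : ℤ) : ℚ)) / (Nat.factorial m : ℚ)) := by
        intro i _
        ring
      rw [Finset.sum_congr rfl hfin, Finset.sum_neg_distrib, ← Finset.sum_div]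
      ring


theorem stmt_0 (d : ℕ) (hd : 1 ≤ d) :
    ∃ q : Polynomial ℤ, ∀ n : ℕ,
      ∑ k ∈ Finset.range n, (((k : ℚ) ^ d - (bell d : ℚ)) / (Nat.factorial k : ℚ)) =
        -(((q.eval (n : ℤ) : ℤ) : ℚ) / (Nat.factorial n : ℚ)) := by
  exact key d
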